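/- Let U be a measurable space, L a finite set (with the discrete σ-algebra), F: U → L and Φ: U → ℝ^d measurable maps, h: ℝ^d → ℝ a measurable map, and P_D a probability measure on U × L. Fix ℓ_j ∈ L such that the event B = {(u, y) : F(u) = ℓ_j and y ≠ ℓ_j} has P_D(B) > 0, and let ν be the conditional measure P_D(· | B). Let (V_1, W_1), …, (V_m, W_m) be independent samples from ν, let G_m be the empirical cumulative distribution function of the values h(Φ(V_1)), …, h(Φ(V_m)), and let (u, ℓ) be a fresh sample from P_D independent of the training sample. Then for every Δ ∈ (0,1), the conditional probability (jointly over the training sample and (u, ℓ)) satisfies P(h(Φ(u)) ≤ G_m^†(Δ) | F(u) = ℓ_j, ℓ ≠ ℓ_j) ≥ ρ(Δ, m), where ρ(a, d) = sup_{ε ∈ (0,1]} max(a − ε, 0)·(1 − 2·exp(−2dε²)). -/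

import Mathlib

open MeasureTheory ProbabilityTheory

/-- Empirical cumulative distribution function of the sample `x : Fin m → ℝ`. -/
noncomputable def ecdf {m : ℕ} (x : Fin m → ℝ) (s : ℝ) : ℝ :=
  (1 / m) * ∑ i, if x i ≤ s then (1 : ℝ) else 0

/-- Pseudo-inverse of a function `G : ℝ → ℝ`: `G†(y) = inf {x | G x ≥ y}`. -/
noncomputable def pinv (G : ℝ → ℝ) (y : ℝ) : ℝ :=
  sInf {x : ℝ | G x ≥ y}

/-- `ρ(a, d) = sup_{ε ∈ (0,1]} max(a - ε, 0) (1 - 2 exp(-2 d ε²))`. -/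
noncomputable def rho (a : ℝ) (d : ℕ) : ℝ :=
  ⨆ ε : Set.Ioc (0 : ℝ) 1, max (a - ε.1) 0 * (1 - 2 * Real.exp (-2 * d * ε.1 ^ 2))

/-
Fix `ε ∈ (0, Δ)` and let `t` be a `(Δ - ε)`-quantile of `h ∘ Φ` under `ν = P_D(· | B)`. If fewer
than `Δ m` training values fall strictly below `t`, the empirical `Δ`-quantile is at least `t`, so a
fresh sample from `B` is rejected as soon as `h(Φ(u)) ≤ t`; by independence of the fresh sample from
the training sample, that happens with conditional probability at least `Δ - ε`. By Hoeffding's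
inequality at least `Δ m` training values fall below `t` with probability at most `exp(-2 m ε²)`,
so the rejection probability is at least `(Δ - ε)(1 - exp(-2 m ε²))`.
-/

open Set Real
open scoped NNReal Finset

section ecdf

open Finset

variable {m : ℕ}

lemma ecdf_eq_card_div (y : Fin m → ℝ) (s : ℝ) : ecdf y s = #{i | y i ≤ s} / m := by
  simp [ecdf, Finset.sum_boole, div_eq_inv_mul]

lemma le_pinv_ecdf_of_card_lt {y : Fin m → ℝ} {Δ t : ℝ} (hΔ : Δ ≤ 1)
    (hcard : (#{i | y i < t} : ℝ) < Δ * m) : t ≤ pinv (ecdf y) Δ := by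
  have hm : (0 : ℝ) < m := by
    rcases Nat.eq_zero_or_pos m with rfl | hm
    · simp at hcard
    · exact_mod_cast hm
  obtain ⟨M, hM⟩ := (Set.finite_range y).bddAbove
  have hne : {x | ecdf y x ≥ Δ}.Nonempty := by
    refine ⟨M, ?_⟩
    rw [Set.mem_ofPred_eq, ecdf_eq_card_div, filter_true_of_mem fun i _ => hM (mem_range_self i),
      card_univ, Fintype.card_fin, div_self hm.ne']
    exact hΔ
  by_contra! hlt
  obtain ⟨x, hx, hxt⟩ := exists_lt_of_csInf_lt hne hlt
  have hcard_le : (#{i | y i ≤ x} : ℝ) ≤ #{i | y i < t} :=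
    Nat.mono_cast <| card_le_card fun i hi =>
      mem_filter.2 ⟨Finset.mem_univ i, (mem_filter.1 hi).2.trans_lt hxt⟩
  rw [Set.mem_ofPred_eq, ecdf_eq_card_div, ge_iff_le, le_div_iff₀ hm] at hx
  linarith

end ecdf

lemma rho_le {a x : ℝ} {d : ℕ} (hx : 0 ≤ x)
    (h : ∀ ε ∈ Ioc (0 : ℝ) 1, ε < a → (a - ε) * (1 - exp (-2 * d * ε ^ 2)) ≤ x) :
    rho a d ≤ x := by
  have : Nonempty (Ioc (0 : ℝ) 1) := ⟨⟨1, by norm_num⟩⟩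
  refine ciSup_le fun ⟨ε, hε⟩ => ?_
  dsimp only
  rcases le_or_gt a ε with haε | hεa
  · simpa [max_eq_right (sub_nonpos.2 haε)] using hx
  · rw [max_eq_left (sub_pos.2 hεa).le]
    calc _ ≤ (a - ε) * (1 - exp (-2 * d * ε ^ 2)) :=
          mul_le_mul_of_nonneg_left (by linarith [exp_pos (-2 * d * ε ^ 2)]) (by linarith)
      _ ≤ x := h ε hε hεa

lemma exists_measureReal_Iio_le_le_measureReal_Iic (μ : Measure ℝ) [IsProbabilityMeasure μ]
    {r : ℝ} (hr0 : 0 < r) (hr1 : r < 1) : ∃ t, μ.real (Iio t) ≤ r ∧ r ≤ μ.real (Iic t) := by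
  set S := {s | r ≤ cdf μ s}
  have hne : S.Nonempty := ((tendsto_cdf_atTop μ).eventually (eventually_ge_nhds hr1)).exists
  have hbdd : BddBelow S := by
    obtain ⟨b, hb⟩ := Filter.eventually_atBot.1
      ((tendsto_cdf_atBot μ).eventually (eventually_lt_nhds hr0))
    exact ⟨b, fun s hs => not_lt.1 fun hsb => (hb s hsb.le).not_ge hs⟩
  refine ⟨sInf S, ?_, ?_⟩
  · rw [measureReal_def, ← measure_cdf μ, (cdf μ).measure_Iio (tendsto_cdf_atBot μ), sub_zero,
      ENNReal.toReal_ofReal', (monotone_cdf μ).leftLim_eq_sSup]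
    refine max_le (csSup_le (nonempty_Iio.image _) (forall_mem_image.2 fun s hs => ?_)) hr0.le
    exact (not_le.1 (notMem_of_lt_csInf (s := S) hs hbdd)).le
  · rw [← cdf_eq_real, ← (cdf μ).iInf_Ioi_eq]
    refine le_ciInf fun ⟨s, hs⟩ => ?_
    obtain ⟨w, hw, hws⟩ := exists_lt_of_csInf_lt hne hs
    exact hw.trans (monotone_cdf μ hws.le)

namespace ProbabilityTheory

variable {Ω α β : Type*} [MeasurableSpace Ω] [MeasurableSpace α] [MeasurableSpace β]
  {μ : Measure Ω}

lemma iIndepFun.indepFun_sumElim {ι : Type*} [Fintype ι] {f : ι → Ω → β} {g : Ω → β}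
    (h : iIndepFun (Sum.elim f fun _ : Unit => g) μ) (hf : ∀ i, Measurable (f i))
    (hg : Measurable g) : IndepFun (fun ω i => f i ω) g μ := by
  classical
  have hST := h.indepFun_finset (Finset.univ.map .inl) {.inr ()} (by simp [Finset.disjoint_left])
    (by rintro (i | i); exacts [hf i, hg])
  have hφ : Measurable fun (x : (Finset.univ.map .inl : Finset (ι ⊕ Unit)) → β) i =>
      x ⟨.inl i, by simp⟩ := measurable_pi_lambda _ fun i => measurable_pi_apply _
  have hψ : Measurable fun (x : ({.inr ()} : Finset (ι ⊕ Unit)) → β) =>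
      x ⟨.inr (), by simp⟩ := measurable_pi_apply _
  exact hST.comp hφ hψ

lemma IndepFun.cond_preimage_inter_preimage {X : Ω → α} {V : Ω → β} (hXV : IndepFun X V μ)
    (hV : Measurable V) {s : Set α} {B t : Set β} (hs : MeasurableSet s) (hB : MeasurableSet B)
    (ht : MeasurableSet t) : μ[X ⁻¹' s ∩ V ⁻¹' t | V ⁻¹' B] = μ (X ⁻¹' s) * (μ.map V)[t | B] := by
  have hinter : V ⁻¹' B ∩ (X ⁻¹' s ∩ V ⁻¹' t) = X ⁻¹' s ∩ V ⁻¹' (B ∩ t) := by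
    ext; simp only [mem_inter_iff, Set.mem_preimage]; tauto
  rw [cond_apply (hV hB), cond_apply hB, Measure.map_apply hV hB,
    Measure.map_apply hV (hB.inter ht), hinter,
    hXV.measure_inter_preimage_eq_mul _ _ hs (hB.inter ht), mul_left_comm]

end ProbabilityTheory

lemma measurable_card_filter_lt {ι : Type*} [Fintype ι] (t : ℝ) :
    Measurable fun y : ι → ℝ => (#{i | y i < t} : ℝ) := by
  simp only [Finset.natCast_card_filter]
  exact Finset.measurable_sum _ fun i _ =>
    Measurable.ite (measurable_pi_apply i measurableSet_Iio) measurable_const measurable_const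

section Hoeffding

variable {Ω ι : Type*} [MeasurableSpace Ω] [Fintype ι] {P : Measure Ω} [IsProbabilityMeasure P]
  {Y : ι → Ω → ℝ} {t a ε : ℝ}

lemma measureReal_le_card_lt_le_exp (hY : ∀ i, Measurable (Y i)) (hindep : iIndepFun Y P)
    (hfreq : ∀ i, P.real {ω | Y i ω < t} ≤ a - ε) (hε : 0 ≤ ε) :
    P.real {ω | a * Fintype.card ι ≤ #{i | Y i ω < t}} ≤ exp (-2 * Fintype.card ι * ε ^ 2) := by
  set n := Fintype.card ι
  set Z : ι → Ω → ℝ := fun i ω => (Iio t).indicator 1 (Y i ω)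
  have hZ : ∀ i, Measurable (Z i) := fun i =>
    (measurable_one.indicator measurableSet_Iio).comp (hY i)
  have hZ_mean : ∀ i, P[Z i] = P.real {ω | Y i ω < t} := fun i =>
    integral_indicator_one (hY i measurableSet_Iio)
  have hZ_sum : ∀ ω, ∑ i, Z i ω = #{i | Y i ω < t} := fun ω => by
    simp [Z, Set.indicator_apply, Finset.sum_boole]
  have hsubG : ∀ i ∈ (Finset.univ : Finset ι),
      HasSubgaussianMGF (fun ω => Z i ω - P[Z i]) ((‖(1 : ℝ) - 0‖₊ / 2) ^ 2) P :=
    fun i _ => hasSubgaussianMGF_of_mem_Icc (hZ i).aemeasurable (ae_of_all _ fun ω => by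
      by_cases hω : Y i ω < t <;> simp [Z, hω])
  have hindepZ : iIndepFun (fun i ω => Z i ω - P[Z i]) P :=
    (hindep.comp (fun (i : ι) (y : ℝ) => (Iio t).indicator (1 : ℝ → ℝ) y - P[Z i])
      fun i => (measurable_one.indicator measurableSet_Iio).sub_const _ :)
  calc P.real {ω | a * n ≤ #{i | Y i ω < t}}
      ≤ P.real {ω | ε * n ≤ ∑ i, (Z i ω - P[Z i])} := by
        refine measureReal_mono fun ω hω => ?_
        have hmean : ∑ i, P[Z i] ≤ (a - ε) * n :=
          (Finset.sum_le_sum fun i _ => (hZ_mean i).trans_le (hfreq i)).trans_eq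
            (by rw [Finset.sum_const, Finset.card_univ, nsmul_eq_mul, mul_comm])
        simp only [Set.mem_ofPred_eq, Finset.sum_sub_distrib, hZ_sum] at hω ⊢
        linarith
    _ ≤ _ := HasSubgaussianMGF.measure_sum_ge_le_of_iIndepFun hindepZ hsubG (by positivity)
    _ = exp (-2 * n * ε ^ 2) := by
        congr 1
        rcases eq_or_ne (n : ℝ) 0 with hn | hn
        · simp [hn]
        · simp [n, Finset.sum_const, Finset.card_univ]
          field_simp

lemma one_sub_exp_le_measureReal_card_lt_lt (hY : ∀ i, Measurable (Y i))
    (hindep : iIndepFun Y P) (hfreq : ∀ i, P.real {ω | Y i ω < t} ≤ a - ε) (hε : 0 ≤ ε) :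
    1 - exp (-2 * Fintype.card ι * ε ^ 2) ≤ P.real {ω | #{i | Y i ω < t} < a * Fintype.card ι} := by
  have hmeas : MeasurableSet {ω | a * Fintype.card ι ≤ #{i | Y i ω < t}} :=
    measurableSet_le measurable_const
      ((measurable_card_filter_lt t).comp (measurable_pi_lambda _ hY))
  rw [show {ω | #{i | Y i ω < t} < a * Fintype.card ι} = {ω | a * Fintype.card ι ≤ #{i | Y i ω < t}}ᶜ
    by ext; simp [not_le], probReal_compl_eq_one_sub hmeas]
  linarith [measureReal_le_card_lt_le_exp hY hindep hfreq hε]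

end Hoeffding

lemma mul_one_sub_exp_le_measureReal_cond_le_pinv_ecdf {Ω β : Type*} [MeasurableSpace Ω]
    [MeasurableSpace β] {P : Measure Ω} [IsProbabilityMeasure P] {m : ℕ} {Y : Fin m → Ω → ℝ}
    {V : Ω → β} {ψ : β → ℝ} {B : Set β} (hY : ∀ i, Measurable (Y i)) (hV : Measurable V)
    (hψ : Measurable ψ) (hB : MeasurableSet B) (hB0 : P.map V B ≠ 0) (hindepY : iIndepFun Y P)
    (hindepYV : IndepFun (fun ω i => Y i ω) V P)
    (hlaw : ∀ i, P.map (Y i) = ((P.map V)[|B]).map ψ) {Δ ε : ℝ} (hε : 0 < ε) (hεΔ : ε < Δ)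
    (hΔ : Δ ≤ 1) :
    (Δ - ε) * (1 - exp (-2 * m * ε ^ 2))
      ≤ (P[|V ⁻¹' B]).real {ω | ψ (V ω) ≤ pinv (ecdf fun i => Y i ω) Δ} := by
  have := cond_isProbabilityMeasure hB0
  have := Measure.isProbabilityMeasure_map (μ := (P.map V)[|B]) hψ.aemeasurable
  obtain ⟨t, hIio, hIic⟩ := exists_measureReal_Iio_le_le_measureReal_Iic
    (((P.map V)[|B]).map ψ) (sub_pos.2 hεΔ) (by linarith)
  set X : Ω → Fin m → ℝ := fun ω i => Y i ω
  set good : Set (Fin m → ℝ) := {y | (#{i | y i < t} : ℝ) < Δ * m}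
  have hgood : 1 - exp (-2 * m * ε ^ 2) ≤ P.real (X ⁻¹' good) := by
    have hfreq : ∀ i, P.real {ω | Y i ω < t} ≤ Δ - ε := fun i => by
      rwa [← hlaw i, map_measureReal_apply (hY i) measurableSet_Iio] at hIio
    have := one_sub_exp_le_measureReal_card_lt_lt hY hindepY hfreq hε.le
    rwa [Fintype.card_fin] at this
  have hrej : X ⁻¹' good ∩ V ⁻¹' (ψ ⁻¹' Iic t)
      ⊆ {ω | ψ (V ω) ≤ pinv (ecdf fun i => Y i ω) Δ} :=
    fun ω ⟨hω, hωt⟩ => hωt.trans (le_pinv_ecdf_of_card_lt hΔ hω)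
  calc (Δ - ε) * (1 - exp (-2 * m * ε ^ 2))
      ≤ ((P.map V)[|B]).real (ψ ⁻¹' Iic t) * P.real (X ⁻¹' good) := by
        rw [map_measureReal_apply hψ measurableSet_Iic] at hIic
        exact mul_le_mul_of_nonneg hIic hgood (by linarith) measureReal_nonneg
    _ = (P[|V ⁻¹' B]).real (X ⁻¹' good ∩ V ⁻¹' (ψ ⁻¹' Iic t)) := by
        rw [measureReal_def _ (_ ∩ _), hindepYV.cond_preimage_inter_preimage hV
          (measurableSet_lt (measurable_card_filter_lt t) measurable_const) hB
          (hψ measurableSet_Iic), ENNReal.toReal_mul, mul_comm]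
        rfl
    _ ≤ _ := measureReal_mono hrej

theorem stmt6_general {U : Type*} [MeasurableSpace U]
    {L : Type*} [MeasurableSpace L] [DiscreteMeasurableSpace L]
    {d : ℕ} (F : U → L) (Φ : U → (Fin d → ℝ)) (h : (Fin d → ℝ) → ℝ)
    (hF : Measurable F) (hΦ : Measurable Φ) (hh : Measurable h)
    (PD : Measure (U × L)) [IsProbabilityMeasure PD]
    (ℓj : L) (hB : 0 < PD {q : U × L | F q.1 = ℓj ∧ q.2 ≠ ℓj})
    {m : ℕ} {Ω : Type*} [MeasurableSpace Ω] (P : Measure Ω) [IsProbabilityMeasure P]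
    (T : Fin m → Ω → U × L) (u : Ω → U) (ℓ : Ω → L)
    (hmT : ∀ i, Measurable (T i)) (hmu : Measurable u) (hmℓ : Measurable ℓ)
    (hindep : iIndepFun
      (Sum.elim T fun _ : Unit => fun ω => (u ω, ℓ ω)) P)
    (hT : ∀ i, Measure.map (T i) P = PD[|{q : U × L | F q.1 = ℓj ∧ q.2 ≠ ℓj}])
    (hu : Measure.map (fun ω => (u ω, ℓ ω)) P = PD)
    (Δ : ℝ) (hΔ : Δ ∈ Set.Ioo (0 : ℝ) 1) :
    ((P[|{ω | F (u ω) = ℓj ∧ ℓ ω ≠ ℓj}])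
        {ω | h (Φ (u ω)) ≤ pinv (ecdf fun i => h (Φ (T i ω).1)) Δ}).toReal
      ≥ rho Δ m := by
  set B : Set (U × L) := {q | F q.1 = ℓj ∧ q.2 ≠ ℓj}
  have hBm : MeasurableSet B := (hF.comp measurable_fst (measurableSet_singleton ℓj)).inter
    (measurable_snd (measurableSet_singleton ℓj)).compl
  set φ : U × L → ℝ := fun q => h (Φ q.1)
  have hφ : Measurable φ := hh.comp (hΦ.comp measurable_fst)
  set V : Ω → U × L := fun ω => (u ω, ℓ ω)
  have hV : Measurable V := hmu.prodMk hmℓ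
  have hindepT : iIndepFun (fun i ω => φ (T i ω)) P :=
    (hindep.precomp Sum.inl_injective).comp (fun _ => φ) fun _ => hφ
  have hindepTV : IndepFun (fun ω i => φ (T i ω)) V P :=
    (hindep.indepFun_sumElim hmT hV).comp (φ := fun x i => φ (x i))
      (measurable_pi_lambda _ fun i => hφ.comp (measurable_pi_apply i)) measurable_id
  have hlaw : ∀ i, P.map (fun ω => φ (T i ω)) = ((P.map V)[|B]).map φ := fun i => by
    rw [hu, ← hT i, Measure.map_map hφ (hmT i)]; rfl
  exact rho_le ENNReal.toReal_nonneg fun ε hε hεΔ =>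
    mul_one_sub_exp_le_measureReal_cond_le_pinv_ecdf (fun i => hφ.comp (hmT i)) hV hφ hBm
      (hu ▸ hB.ne') hindepT hindepTV hlaw hε.1 hεΔ hΔ.2.le

/-- Rejection bound of Theorem 1: the corrector rejects an incorrect decision of the
classifier `F` with conditional probability at least `ρ(Δ, m)`. The training pairs
`T i = (Vᵢ, Wᵢ)` are i.i.d. from the conditional measure `P_D(· | F(u) = ℓj, y ≠ ℓj)`,
the fresh sample `(u, ℓ)` is drawn from `P_D`, and all are jointly independent. -/
theorem stmt6 {U : Type*} [MeasurableSpace U]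
    {L : Type*} [Fintype L] [MeasurableSpace L] [DiscreteMeasurableSpace L]
    {d : ℕ} (F : U → L) (Φ : U → (Fin d → ℝ)) (h : (Fin d → ℝ) → ℝ)
    (hF : Measurable F) (hΦ : Measurable Φ) (hh : Measurable h)
    (PD : Measure (U × L)) [IsProbabilityMeasure PD]
    (ℓj : L) (hB : 0 < PD {q : U × L | F q.1 = ℓj ∧ q.2 ≠ ℓj})
    {m : ℕ} {Ω : Type*} [MeasurableSpace Ω] (P : Measure Ω) [IsProbabilityMeasure P]
    (T : Fin m → Ω → U × L) (u : Ω → U) (ℓ : Ω → L)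
    (hmT : ∀ i, Measurable (T i)) (hmu : Measurable u) (hmℓ : Measurable ℓ)
    (hindep : iIndepFun
      (Sum.elim T fun _ : Unit => fun ω => (u ω, ℓ ω)) P)
    (hT : ∀ i, Measure.map (T i) P = PD[|{q : U × L | F q.1 = ℓj ∧ q.2 ≠ ℓj}])
    (hu : Measure.map (fun ω => (u ω, ℓ ω)) P = PD)
    (Δ : ℝ) (hΔ : Δ ∈ Set.Ioo (0 : ℝ) 1) :
    ((P[|{ω | F (u ω) = ℓj ∧ ℓ ω ≠ ℓj}])
        {ω | h (Φ (u ω)) ≤ pinv (ecdf fun i => h (Φ (T i ω).1)) Δ}).toReal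
      ≥ rho Δ m :=
  stmt6_general F Φ h hF hΦ hh PD ℓj hB P T u ℓ hmT hmu hmℓ hindep hT hu Δ hΔ
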